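/- (Symplectic structured SVD, real case) Every real symplectic matrix S ∈ Sp(2n, ℝ) admits an SVD of the form S = U · diag(Σ, Σ⁻¹) · V where U and V are orthogonal symplectic matrices (elements of O(2n) ∩ Sp(2n, ℝ)) and Σ is an n×n positive diagonal matrix. -/

import Mathlib

/-!
`A = SᵀS` is symmetric positive definite and symplectic, so `A J A = J`. Hence if `A v = μ v`
then `A (J v) = μ⁻¹ J v`, and `J v ⊥ v` because `J` is skew. The orthogonal complement of
`span {v, J v}` is invariant under `A` and `J`, so induction on the dimension gives orthonormal
eigenvectors `v₁, …, vₙ` of `A` with `⟪vᵢ, J vⱼ⟫ = 0`. The matrix `W = [V | J V]` with columns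
`vᵢ, J vᵢ` is then orthogonal and symplectic with `A W = W diag(Σ², Σ⁻²)`. With
`D = diag(Σ, Σ⁻¹)`, the matrix `U = S W D⁻¹` is orthogonal and symplectic and `S = U D Wᵀ`.
-/

open Matrix Module Submodule
open scoped RealInnerProductSpace

theorem Orthonormal.fin_cons {𝕜 E : Type*} [RCLike 𝕜] [NormedAddCommGroup E]
    [InnerProductSpace 𝕜 E] {m : ℕ} {v₀ : E} {w : Fin m → E} (h₀ : ‖v₀‖ = 1)
    (hw : Orthonormal 𝕜 w) (h : ∀ i, inner 𝕜 v₀ (w i) = 0) :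
    Orthonormal 𝕜 (Fin.cons v₀ w : Fin (m + 1) → E) := by
  rw [orthonormal_iff_ite] at hw ⊢
  intro i j
  cases i using Fin.cases <;> cases j using Fin.cases <;>
    simp [h₀, hw, h, inner_eq_zero_symm.mp (h _), Fin.succ_ne_zero, eq_comm (a := (0 : Fin _))]

theorem mem_orthogonal_span_pair {𝕜 E : Type*} [RCLike 𝕜] [NormedAddCommGroup E]
    [InnerProductSpace 𝕜 E] {a b x : E} :
    x ∈ (span 𝕜 {a, b})ᗮ ↔ inner 𝕜 a x = 0 ∧ inner 𝕜 b x = 0 := by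
  simp [span_insert, ← inf_orthogonal, mem_orthogonal_singleton_iff_inner_right]

section SkewInvolution

variable {E : Type*} [NormedAddCommGroup E] [InnerProductSpace ℝ E] {J T : E →ₗ[ℝ] E}

theorem inner_self_apply_eq_zero_of_skew (hJ : ∀ x y, ⟪J x, y⟫ = -⟪x, J y⟫) (x : E) :
    ⟪x, J x⟫ = 0 := by
  have := hJ x x
  rw [real_inner_comm] at this
  linarith

theorem inner_apply_apply_of_skew (hJ : ∀ x y, ⟪J x, y⟫ = -⟪x, J y⟫)
    (hJJ : ∀ x, J (J x) = -x) (x y : E) : ⟪J x, J y⟫ = ⟪x, y⟫ := by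
  rw [hJ, hJJ, inner_neg_right, neg_neg]

theorem norm_apply_of_skew (hJ : ∀ x y, ⟪J x, y⟫ = -⟪x, J y⟫) (hJJ : ∀ x, J (J x) = -x)
    (x : E) : ‖J x‖ = ‖x‖ :=
  (J.isometryOfInner (inner_apply_apply_of_skew hJ hJJ)).norm_map x

theorem apply_eq_inv_smul_of_eigenvector (hJJ : ∀ x, J (J x) = -x)
    (hTJT : ∀ x, T (J (T x)) = J x) {v : E} (hv : v ≠ 0) {μ : ℝ} (hTv : T v = μ • v) :
    μ ≠ 0 ∧ T (J v) = μ⁻¹ • J v := by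
  have key : μ • T (J v) = J v := by simpa [hTv] using hTJT v
  have hμ : μ ≠ 0 := by
    rintro rfl
    rw [zero_smul] at key
    exact hv (by rw [← neg_neg v, ← hJJ v, ← key, map_zero, neg_zero])
  exact ⟨hμ, (eq_inv_smul_iff₀ hμ).mpr key⟩

theorem LinearMap.IsSymmetric.apply_mem_orthogonal_span_pair (hT : T.IsSymmetric) {a b x : E}
    {μ ν : ℝ} (ha : T a = μ • a) (hb : T b = ν • b) (hx : x ∈ (span ℝ {a, b})ᗮ) :
    T x ∈ (span ℝ {a, b})ᗮ := by
  rw [mem_orthogonal_span_pair] at hx ⊢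
  rw [← hT, ← hT, ha, hb, inner_smul_left, inner_smul_left, hx.1, hx.2]
  simp

theorem apply_mem_orthogonal_span_pair_of_skew (hJ : ∀ x y, ⟪J x, y⟫ = -⟪x, J y⟫)
    (hJJ : ∀ x, J (J x) = -x) {v x : E} (hx : x ∈ (span ℝ {v, J v})ᗮ) :
    J x ∈ (span ℝ {v, J v})ᗮ := by
  rw [mem_orthogonal_span_pair] at hx ⊢
  rw [inner_apply_apply_of_skew hJ hJJ, ← neg_eq_zero, ← hJ, hx.1, hx.2]
  simp

theorem finrank_orthogonal_span_pair_add_two [FiniteDimensional ℝ E]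
    (hJ : ∀ x y, ⟪J x, y⟫ = -⟪x, J y⟫) (hJJ : ∀ x, J (J x) = -x) {v : E} (hv : ‖v‖ = 1) :
    finrank ℝ (span ℝ {v, J v})ᗮ + 2 = finrank ℝ E := by
  have hpair : Orthonormal ℝ ![v, J v] := by
    rw [orthonormal_iff_ite]
    intro i j
    fin_cases i <;> fin_cases j <;>
      simp [hv, norm_apply_of_skew hJ hJJ, inner_self_apply_eq_zero_of_skew hJ, real_inner_comm v]
  have h2 : finrank ℝ (span ℝ {v, J v}) = 2 := by
    rw [← range_cons_cons_empty v (J v) ![], finrank_span_eq_card hpair.linearIndependent,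
      Fintype.card_fin]
  rw [← h2, add_comm, (span ℝ {v, J v}).finrank_add_finrank_orthogonal]

theorem exists_orthonormal_isotropic_eigenvectors (hJ : ∀ x y, ⟪J x, y⟫ = -⟪x, J y⟫)
    (hJJ : ∀ x, J (J x) = -x) (hT : T.IsSymmetric) (hTJT : ∀ x, T (J (T x)) = J x)
    {m : ℕ} (hm : finrank ℝ E = 2 * m) :
    ∃ (v : Fin m → E) (σ : Fin m → ℝ), Orthonormal ℝ v ∧ (∀ i j, ⟪v i, J (v j)⟫ = 0) ∧
      ∀ i, T (v i) = σ i • v i := by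
  induction m generalizing E with
  | zero =>
    refine ⟨Fin.elim0, Fin.elim0, ?_, fun i => i.elim0, fun i => i.elim0⟩
    exact ⟨fun i => i.elim0, fun i => i.elim0⟩
  | succ m ih =>
    have : FiniteDimensional ℝ E := .of_finrank_pos (by omega)
    let i₀ : Fin (2 * (m + 1)) := ⟨0, by omega⟩
    set v₀ := hT.eigenvectorBasis hm i₀
    have hv₀ : ‖v₀‖ = 1 := (hT.eigenvectorBasis hm).orthonormal.1 i₀
    have hTv₀ : T v₀ = hT.eigenvalues hm i₀ • v₀ := hT.apply_eigenvectorBasis hm i₀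
    obtain ⟨-, hTJv₀⟩ :=
      apply_eq_inv_smul_of_eigenvector hJJ hTJT (norm_ne_zero_iff.mp (by simp [hv₀])) hTv₀
    set K := (span ℝ {v₀, J v₀})ᗮ
    have hKT : ∀ x ∈ K, T x ∈ K := fun x => hT.apply_mem_orthogonal_span_pair hTv₀ hTJv₀
    have hKJ : ∀ x ∈ K, J x ∈ K := fun x => apply_mem_orthogonal_span_pair_of_skew hJ hJJ
    have hK : finrank ℝ K = 2 * m := by
      have : finrank ℝ K + 2 = finrank ℝ E := finrank_orthogonal_span_pair_add_two hJ hJJ hv₀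
      omega
    obtain ⟨w, σ, hw, hwJ, hTw⟩ := ih (J := J.restrict hKJ) (T := T.restrict hKT)
      (fun x y => hJ x y) (fun x => Subtype.ext (hJJ x)) (hT.restrict_invariant hKT)
      (fun x => Subtype.ext (hTJT x)) hK
    refine ⟨Fin.cons v₀ (fun i => (w i : E)), Fin.cons (hT.eigenvalues hm i₀) σ, ?_, ?_, ?_⟩
    · exact .fin_cons hv₀ (hw.comp_linearIsometry K.subtypeₗᵢ)
        fun i => (mem_orthogonal_span_pair.mp (w i).2).1
    · intro i j
      cases i using Fin.cases <;> cases j using Fin.cases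
      · exact inner_self_apply_eq_zero_of_skew hJ v₀
      · exact (mem_orthogonal_span_pair.mp (hKJ _ (w _).2)).1
      · rw [real_inner_comm]; exact (mem_orthogonal_span_pair.mp (w _).2).2
      · exact hwJ _ _
    · intro i
      cases i using Fin.cases
      · exact hTv₀
      · exact congrArg Subtype.val (hTw _)

end SkewInvolution

section ColumnMatrix

variable {ι ι' κ : Type*}

def colMatrix (v : ι → EuclideanSpace ℝ κ) : Matrix κ ι ℝ := of fun r i => v i r

@[simp]
theorem colMatrix_apply (v : ι → EuclideanSpace ℝ κ) (r : κ) (i : ι) : colMatrix v r i = v i r :=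
  rfl

theorem transpose_colMatrix_mul_colMatrix [Fintype κ] (v : ι → EuclideanSpace ℝ κ)
    (w : ι' → EuclideanSpace ℝ κ) : (colMatrix v)ᵀ * colMatrix w = of fun i j => ⟪v i, w j⟫ := by
  ext i j
  simp [mul_apply, EuclideanSpace.inner_eq_star_dotProduct, dotProduct, mul_comm]

theorem mul_colMatrix [Fintype κ] [DecidableEq κ] (M : Matrix κ κ ℝ)
    (v : ι → EuclideanSpace ℝ κ) :
    M * colMatrix v = colMatrix fun i => toEuclideanLin M (v i) := by
  ext r i
  simp [mul_apply, mulVec, dotProduct]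

theorem colMatrix_smul [Fintype ι] [DecidableEq ι] (v : ι → EuclideanSpace ℝ κ) (σ : ι → ℝ) :
    colMatrix (fun i => σ i • v i) = colMatrix v * diagonal σ := by
  ext r i
  simp [mul_comm]

end ColumnMatrix

theorem fromBlocks_zero_one_neg_one_zero_eq_neg_J {l R : Type*} [DecidableEq l] [CommRing R] :
    fromBlocks (0 : Matrix l l R) 1 (-1) 0 = -J l R := by
  simp [J, fromBlocks_neg]

theorem mem_symplecticGroup_iff_fromBlocks_zero_one_neg_one_zero {l R : Type*} [DecidableEq l]
    [Fintype l] [CommRing R] {A : Matrix (l ⊕ l) (l ⊕ l) R} :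
    A ∈ symplecticGroup l R ↔
      Aᵀ * fromBlocks 0 1 (-1) 0 * A = fromBlocks 0 1 (-1) 0 := by
  rw [fromBlocks_zero_one_neg_one_zero_eq_neg_J, SymplecticGroup.mem_iff', mul_neg, neg_mul,
    neg_inj]

theorem mul_J_mul_self_of_isSymm {l R : Type*} [DecidableEq l] [Fintype l] [CommRing R]
    {A : Matrix (l ⊕ l) (l ⊕ l) R} (hA : A ∈ symplecticGroup l R) (hAs : A.IsSymm) :
    A * J l R * A = J l R := by
  simpa [hAs.eq] using SymplecticGroup.mem_iff.mp hA

section SymplecticFrame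

variable {l R : Type*} [DecidableEq l] [Fintype l] [CommRing R] {V : Matrix (l ⊕ l) l R}

theorem transpose_fromCols_mul_fromCols_J (h1 : Vᵀ * V = 1) (h0 : Vᵀ * J l R * V = 0) :
    (fromCols V (J l R * V))ᵀ * fromCols V (J l R * V) = 1 := by
  simp [transpose_fromCols, transpose_mul, ← Matrix.mul_assoc, h1, h0,
    Matrix.mul_assoc _ (J l R) (J l R), J_squared]

theorem fromCols_J_mem_symplecticGroup (h1 : Vᵀ * V = 1) (h0 : Vᵀ * J l R * V = 0) :
    fromCols V (J l R * V) ∈ symplecticGroup l R := by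
  rw [SymplecticGroup.mem_iff']
  simp [transpose_fromCols, transpose_mul, ← Matrix.mul_assoc, h1, h0,
    Matrix.mul_assoc _ (J l R) (J l R), J_squared]
  rfl

end SymplecticFrame

theorem exists_colMatrix_isotropic_eigenvectors {l : Type*} [Fintype l] [DecidableEq l]
    {A : Matrix (l ⊕ l) (l ⊕ l) ℝ} (hA : A ∈ symplecticGroup l ℝ) (hAh : A.IsHermitian) :
    ∃ (V : Matrix (l ⊕ l) l ℝ) (σ : l → ℝ),
      Vᵀ * V = 1 ∧ Vᵀ * J l ℝ * V = 0 ∧ A * V = V * diagonal σ := by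
  have hJ : ∀ x y, ⟪toEuclideanLin (J l ℝ) x, y⟫ = -⟪x, toEuclideanLin (J l ℝ) y⟫ := by
    intro x y
    rw [← LinearMap.adjoint_inner_right, ← toEuclideanLin_conjTranspose_eq_adjoint,
      conjTranspose_eq_transpose_of_trivial, J_transpose, map_neg, LinearMap.neg_apply,
      inner_neg_right]
  have hJJ : ∀ x, toEuclideanLin (J l ℝ) (toEuclideanLin (J l ℝ) x) = -x := by
    intro x
    ext r
    simp [mulVec_mulVec, J_squared, neg_mulVec]
  have hAJA : ∀ x, toEuclideanLin A (toEuclideanLin (J l ℝ) (toEuclideanLin A x)) =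
      toEuclideanLin (J l ℝ) x := by
    intro x
    ext r
    simp [mulVec_mulVec, ← Matrix.mul_assoc,
      mul_J_mul_self_of_isSymm hA (isHermitian_iff_isSymm.mp hAh)]
  have hdim : finrank ℝ (EuclideanSpace ℝ (l ⊕ l)) = 2 * Fintype.card l := by
    simp [two_mul]
  obtain ⟨v, σ, hv, hvJ, hAv⟩ := exists_orthonormal_isotropic_eigenvectors hJ hJJ
    (isSymmetric_toEuclideanLin_iff.mpr hAh) hAJA hdim
  let e := Fintype.equivFin l
  refine ⟨colMatrix (v ∘ e), σ ∘ e, ?_, ?_, ?_⟩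
  · rw [transpose_colMatrix_mul_colMatrix]
    exact gram_eq_one_iff_orthonormal.mpr (hv.comp e e.injective)
  · rw [Matrix.mul_assoc, mul_colMatrix, transpose_colMatrix_mul_colMatrix]
    ext i j
    exact hvJ _ _
  · rw [mul_colMatrix, ← colMatrix_smul]
    simp [hAv]

theorem exists_orthogonal_symplectic_eigendecomposition {l : Type*} [Fintype l] [DecidableEq l]
    {A : Matrix (l ⊕ l) (l ⊕ l) ℝ} (hA : A ∈ symplecticGroup l ℝ) (hApos : A.PosDef) :
    ∃ (W : Matrix (l ⊕ l) (l ⊕ l) ℝ) (σ : l → ℝ), Wᵀ * W = 1 ∧ W ∈ symplecticGroup l ℝ ∧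
      (∀ i, 0 < σ i) ∧ A * W = W * fromBlocks (diagonal σ) 0 0 (diagonal σ⁻¹) := by
  obtain ⟨V, σ, h1, h0, hAV⟩ := exists_colMatrix_isotropic_eigenvectors hA hApos.isHermitian
  have hσ : ∀ i, 0 < σ i := by
    have hV : Function.Injective V.mulVec :=
      Function.LeftInverse.injective (g := Vᵀ.mulVec) fun x => by
        rw [mulVec_mulVec, h1, one_mulVec]
    have hpos := hApos.conjTranspose_mul_mul_same hV
    rw [conjTranspose_eq_transpose_of_trivial, Matrix.mul_assoc, hAV, ← Matrix.mul_assoc, h1,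
      Matrix.one_mul] at hpos
    intro i
    simpa using hpos.diag_pos (i := i)
  have hAJV : A * (J l ℝ * V) = J l ℝ * V * diagonal σ⁻¹ := by
    have hσσ : diagonal σ * diagonal σ⁻¹ = 1 := by
      simp [diagonal_mul_diagonal, fun i => mul_inv_cancel₀ (hσ i).ne']
    calc A * (J l ℝ * V) = A * J l ℝ * (V * diagonal σ) * diagonal σ⁻¹ := by
          rw [Matrix.mul_assoc _ (V * diagonal σ), Matrix.mul_assoc V, hσσ]
          simp [Matrix.mul_assoc]
      _ = J l ℝ * V * diagonal σ⁻¹ := by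
          rw [← hAV, ← Matrix.mul_assoc (A * J l ℝ),
            mul_J_mul_self_of_isSymm hA (isHermitian_iff_isSymm.mp hApos.isHermitian)]
  refine ⟨fromCols V (J l ℝ * V), σ, transpose_fromCols_mul_fromCols_J h1 h0,
    fromCols_J_mem_symplecticGroup h1 h0, hσ, ?_⟩
  rw [mul_fromCols, fromCols_mul_fromBlocks, hAV, hAJV]
  simp

theorem fromBlocks_diagonal_mem_symplecticGroup {l R : Type*} [DecidableEq l] [Fintype l]
    [CommRing R] {d e : l → R} (h : ∀ i, d i * e i = 1) :
    fromBlocks (diagonal d) 0 0 (diagonal e) ∈ symplecticGroup l R := by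
  rw [SymplecticGroup.fromBlocks_mem_iff]
  simp [h]

theorem exists_orthogonal_symplectic_svd {l : Type*} [Fintype l] [DecidableEq l]
    {S : Matrix (l ⊕ l) (l ⊕ l) ℝ} (hS : S ∈ symplecticGroup l ℝ) :
    ∃ (U V : Matrix (l ⊕ l) (l ⊕ l) ℝ) (σ : l → ℝ),
      Uᵀ * U = 1 ∧ U ∈ symplecticGroup l ℝ ∧ Vᵀ * V = 1 ∧ V ∈ symplecticGroup l ℝ ∧
      (∀ i, 0 < σ i) ∧ S = U * fromBlocks (diagonal σ) 0 0 (diagonal σ⁻¹) * V := by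
  have hpos : (Sᵀ * S).PosDef := by
    have hS' : IsUnit S := (isUnit_iff_isUnit_det S).mpr (SymplecticGroup.symplectic_det hS)
    simpa [conjTranspose_eq_transpose_of_trivial] using
      PosDef.conjTranspose_mul_self S (mulVec_injective_of_isUnit hS')
  obtain ⟨W, σ, hW, hWS, hσ, hSW⟩ := exists_orthogonal_symplectic_eigendecomposition
    (mul_mem (SymplecticGroup.transpose_mem hS) hS) hpos
  set τ : l → ℝ := fun i => √(σ i)
  have hτ : ∀ i, 0 < τ i := fun i => Real.sqrt_pos.mpr (hσ i)
  set D := fromBlocks (diagonal τ) 0 0 (diagonal τ⁻¹)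
  set D' := fromBlocks (diagonal τ⁻¹) 0 0 (diagonal τ)
  have hDD' : D * D' = 1 := by
    simp only [D, D', fromBlocks_diagonal, diagonal_mul_diagonal, ← diagonal_one]
    congr 1; ext (i | i) <;> simp [(hτ i).ne']
  have hD'D : D' * D = 1 := mul_eq_one_comm.mp hDD'
  have hDD : D * D = fromBlocks (diagonal σ) 0 0 (diagonal σ⁻¹) := by
    simp only [D, fromBlocks_diagonal, diagonal_mul_diagonal]
    congr 1; ext (i | i) <;> simp [τ, Real.mul_self_sqrt (hσ i).le, ← mul_inv]
  have hD'S : D' ∈ symplecticGroup l ℝ :=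
    fromBlocks_diagonal_mem_symplecticGroup fun i => inv_mul_cancel₀ (hτ i).ne'
  refine ⟨S * W * D', Wᵀ, τ, ?_, mul_mem (mul_mem hS hWS) hD'S,
    by rwa [transpose_transpose, mul_eq_one_comm], SymplecticGroup.transpose_mem hWS, hτ, ?_⟩
  · calc (S * W * D')ᵀ * (S * W * D') = D' * (Wᵀ * (Sᵀ * S * W)) * D' := by
          simp [D', transpose_mul, Matrix.mul_assoc]
      _ = D' * D * (D * D') := by
          rw [hSW, ← hDD, ← Matrix.mul_assoc Wᵀ, hW, Matrix.one_mul]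
          simp [Matrix.mul_assoc]
      _ = 1 := by rw [hD'D, hDD', Matrix.one_mul]
  · calc S = S * (W * Wᵀ) := by rw [mul_eq_one_comm.mp hW, Matrix.mul_one]
      _ = S * W * D' * D * Wᵀ := by
          rw [Matrix.mul_assoc _ D', hD'D]
          simp [Matrix.mul_assoc]

theorem symplectic_structured_svd_real (n : ℕ)
    (S : Matrix (Fin n ⊕ Fin n) (Fin n ⊕ Fin n) ℝ)
    (hS : Sᵀ * Matrix.fromBlocks 0 1 (-1) 0 * S = Matrix.fromBlocks 0 1 (-1) 0) :
    ∃ (U V : Matrix (Fin n ⊕ Fin n) (Fin n ⊕ Fin n) ℝ) (σ : Fin n → ℝ),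
      Uᵀ * U = 1 ∧
      Uᵀ * Matrix.fromBlocks 0 1 (-1) 0 * U = Matrix.fromBlocks 0 1 (-1) 0 ∧
      Vᵀ * V = 1 ∧
      Vᵀ * Matrix.fromBlocks 0 1 (-1) 0 * V = Matrix.fromBlocks 0 1 (-1) 0 ∧
      (∀ i, 0 < σ i) ∧
      S = U * Matrix.fromBlocks (Matrix.diagonal σ) 0 0
            (Matrix.diagonal fun i => (σ i)⁻¹) * V := by
  simp only [← mem_symplecticGroup_iff_fromBlocks_zero_one_neg_one_zero] at hS ⊢
  exact exists_orthogonal_symplectic_svd hS
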